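/- arXiv:1808.07007 — 7 statements merged into one kernel-verified Lean document; each statement's English description precedes it below -/
import Mathlib

section
/- Let H ⊆ ℝ be bounded and MS^aa(H) = {(x+y)/2 : x, y ∈ H}. Then the set of accumulation points of MS^aa(H) equals {(x+y)/2 : x, y ∈ H' } ∪ {(x+y)/2 : x ∈ H', y ∈ H}, where H' is the set of accumulation points of H. -/
/-!
`MS^aa(H)` is the image of `H × H` under the continuous map `m (x, y) = (x + y) / 2`. Since
`closure (H × H)` is compact, every accumulation point of the image is `m` of an accumulation point
of `H × H`, and such a point has one coordinate in `H'` and the other in `closure H = H ∪ H'`.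
Conversely, for `b ∈ H` the injective map `a ↦ (a + b) / 2` sends `H'` into the derived set of
`MS^aa(H)`; as derived sets are closed, `b` may then range over `closure H`.
-/

open Set Filter Topology

/-- The mean-set `MS^aa(H) = {(x+y)/2 : x, y ∈ H}`. -/
def msaa (H : Set ℝ) : Set ℝ := {z | ∃ x ∈ H, ∃ y ∈ H, z = (x + y) / 2}

section DerivedSet

variable {X Y : Type*} [TopologicalSpace X] [TopologicalSpace Y]

theorem mem_derivedSet_iff_mem_closure_sdiff {s : Set X} {x : X} :
    x ∈ derivedSet s ↔ x ∈ closure (s \ {x}) := by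
  rw [mem_derivedSet, accPt_principal_iff_clusterPt, mem_closure_iff_clusterPt]

theorem derivedSet_image_subset_image_derivedSet [T2Space Y] {s : Set X} {f : X → Y}
    (hf : Continuous f) (hs : IsCompact (closure s)) :
    derivedSet (f '' s) ⊆ f '' derivedSet s := by
  intro z hz
  rw [mem_derivedSet_iff_mem_closure_sdiff, ← image_sdiff_preimage] at hz
  -- `f` maps the compact set `closure (s \ f ⁻¹' {z})` onto a closed set, which thus contains `z`.
  rw [← image_closure_of_isCompact (hs.of_isClosed_subset isClosed_closure
    (closure_mono sdiff_subset)) hf.continuousOn] at hz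
  obtain ⟨p, hp, rfl⟩ := hz
  refine ⟨p, mem_derivedSet_iff_mem_closure_sdiff.2 (closure_mono ?_ hp), rfl⟩
  rintro a ⟨has, hap⟩
  exact ⟨has, fun h ↦ hap (congrArg f h)⟩

theorem derivedSet_prod_subset (s : Set X) (t : Set Y) :
    derivedSet (s ×ˢ t) ⊆ derivedSet s ×ˢ closure t ∪ closure s ×ˢ derivedSet t := by
  rintro ⟨p, q⟩ hpq
  have hcl : (p, q) ∈ closure s ×ˢ closure t := by
    rw [← closure_prod_eq]
    exact derivedSet_subset_closure _ hpq
  rw [mem_derivedSet, accPt_iff_frequently, nhds_prod_eq] at hpq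
  have : (∃ᶠ x in 𝓝 p ×ˢ 𝓝 q, x.1 ≠ p ∧ x.1 ∈ s) ∨ ∃ᶠ x in 𝓝 p ×ˢ 𝓝 q, x.2 ≠ q ∧ x.2 ∈ t := by
    refine frequently_or_distrib.mp (hpq.mono ?_)
    rintro ⟨a, b⟩ ⟨hne, ha, hb⟩
    by_cases hap : a = p
    · exact Or.inr ⟨fun hbq ↦ hne (Prod.ext hap hbq), hb⟩
    · exact Or.inl ⟨hap, ha⟩
  rcases this with hp | hq
  · exact Or.inl ⟨accPt_iff_frequently.mpr (tendsto_fst.frequently hp), hcl.2⟩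
  · exact Or.inr ⟨hcl.1, accPt_iff_frequently.mpr (tendsto_snd.frequently hq)⟩

end DerivedSet

theorem msaa_eq_image (H : Set ℝ) : msaa H = (fun p : ℝ × ℝ ↦ (p.1 + p.2) / 2) '' H ×ˢ H := by
  ext z
  simp [msaa, eq_comm, and_assoc]

theorem mem_derivedSet_msaa {H : Set ℝ} {x y : ℝ} (hx : x ∈ derivedSet H) (hy : y ∈ closure H) :
    (x + y) / 2 ∈ derivedSet (msaa H) := by
  have hH : MapsTo (fun b ↦ (x + b) / 2) H (derivedSet (msaa H)) := by
    intro b hb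
    have hinj : Function.Injective fun a : ℝ ↦ (a + b) / 2 := fun a a' h ↦ by simpa using h
    have hcont : Continuous fun a : ℝ ↦ (a + b) / 2 := by fun_prop
    refine derivedSet_mono _ _ ?_ (hcont.image_derivedSet hinj ⟨x, hx, rfl⟩)
    rintro _ ⟨a, ha, rfl⟩
    exact ⟨a, ha, b, hb, rfl⟩
  simpa [(isClosed_derivedSet _).closure_eq] using map_mem_closure (by fun_prop) hy hH

theorem stmt_6 (H : Set ℝ) (hbb : BddBelow H) (hba : BddAbove H) :
    derivedSet (msaa H) =
      {z | ∃ x ∈ derivedSet H, ∃ y ∈ derivedSet H, z = (x + y) / 2} ∪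
      {z | ∃ x ∈ derivedSet H, ∃ y ∈ H, z = (x + y) / 2} := by
  refine Subset.antisymm ?_ ?_
  · have hcpt : IsCompact (closure (H ×ˢ H)) := by
      have := (isBounded_iff_bddBelow_bddAbove.mpr ⟨hbb, hba⟩).isCompact_closure
      rw [closure_prod_eq]
      exact this.prod this
    rw [msaa_eq_image]
    intro z hz
    obtain ⟨⟨a, b⟩, hab, rfl⟩ := derivedSet_image_subset_image_derivedSet (by fun_prop) hcpt hz
    obtain ⟨x, hx, y, hy, hxy⟩ :
        ∃ x ∈ derivedSet H, ∃ y ∈ closure H, (a + b) / 2 = (x + y) / 2 := by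
      rcases derivedSet_prod_subset H H hab with ⟨ha, hb⟩ | ⟨ha, hb⟩
      exacts [⟨a, ha, b, hb, rfl⟩, ⟨b, hb, a, ha, by rw [add_comm]⟩]
    rw [closure_eq_self_union_derivedSet] at hy
    rcases hy with hy | hy
    exacts [Or.inr ⟨x, hx, y, hy, hxy⟩, Or.inl ⟨x, hx, y, hy, hxy⟩]
  · rintro _ (⟨x, hx, y, hy, rfl⟩ | ⟨x, hx, y, hy, rfl⟩)
    · exact mem_derivedSet_msaa hx (derivedSet_subset_closure H hy)
    · exact mem_derivedSet_msaa hx (subset_closure hy)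
end

section
/- There exists an unbounded set H ⊆ ℝ (e.g., H = {-n - 1/n : n ∈ ℕ} ∪ {n + 2/n : n ∈ ℕ}) such that H has no accumulation points but 0 is an accumulation point of MS^aa(H) = {(x+y)/2 : x, y ∈ H}. -/
/-!
Take `H = {-n : n ∈ ℕ} ∪ {n + 2/(n+1) : n ∈ ℕ}`. Both branches escape to infinity, so every bounded
set meets `H` in finitely many points and `H` has no accumulation point; but the midpoint of `-n`
and `n + 2/(n+1)` is `1/(n+1)`, and these nonzero means converge to `0`.
-/

open Set Filter

open Topology Bornology

lemma Filter.Tendsto.finite_inter_range_of_isBounded {ι X : Type*} [Bornology X] {f : ι → X}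
    (hf : Tendsto f cofinite (cobounded X)) {B : Set X} (hB : Bornology.IsBounded B) :
    (B ∩ range f).Finite := by
  have hpre : (f ⁻¹' B).Finite := by
    simpa only [mem_map, mem_cofinite, preimage_compl, compl_compl] using hf (isBounded_def.1 hB)
  rw [← image_preimage_eq_inter_range]
  exact hpre.image f

lemma not_accPt_of_finite_inter_isBounded {X : Type*} [MetricSpace X] {S : Set X}
    (hS : ∀ B, Bornology.IsBounded B → (B ∩ S).Finite) (x : X) : ¬AccPt x (𝓟 S) := fun hx =>
  Set.Infinite.of_accPt (hx.nhds_inter (Metric.closedBall_mem_nhds x one_pos))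
    (hS _ Metric.isBounded_closedBall)

lemma accPt_of_tendsto {ι X : Type*} [TopologicalSpace X] {l : Filter ι} {u : ι → X} {x : X}
    {S : Set X} (hu : Tendsto u l (𝓝 x)) (hS : ∃ᶠ i in l, u i ≠ x ∧ u i ∈ S) : AccPt x (𝓟 S) :=
  accPt_iff_frequently.2 (hu.frequently hS)

noncomputable def negNat (n : ℕ) : ℝ := -n

noncomputable def natAddTwoDiv (n : ℕ) : ℝ := n + 2 / (n + 1)

lemma tendsto_negNat_atBot : Tendsto negNat atTop atBot :=
  tendsto_neg_atTop_atBot.comp tendsto_natCast_atTop_atTop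

lemma tendsto_natAddTwoDiv_atTop : Tendsto natAddTwoDiv atTop atTop :=
  tendsto_atTop_mono (fun _ => le_add_of_nonneg_right (by positivity)) tendsto_natCast_atTop_atTop

lemma midpoint_negNat_natAddTwoDiv (n : ℕ) : (negNat n + natAddTwoDiv n) / 2 = 1 / (n + 1) := by
  unfold negNat natAddTwoDiv
  ring

lemma finite_inter_range_negNat_union_natAddTwoDiv {B : Set ℝ} (hB : Bornology.IsBounded B) :
    (B ∩ (range negNat ∪ range natAddTwoDiv)).Finite := by
  rw [inter_union_distrib_left]
  have hneg : Tendsto negNat cofinite (cobounded ℝ) := by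
    rw [Nat.cofinite_eq_atTop]
    exact tendsto_negNat_atBot.mono_right IsOrderBornology.atBot_le_cobounded
  have hpos : Tendsto natAddTwoDiv cofinite (cobounded ℝ) := by
    rw [Nat.cofinite_eq_atTop]
    exact tendsto_natAddTwoDiv_atTop.mono_right IsOrderBornology.atTop_le_cobounded
  exact (hneg.finite_inter_range_of_isBounded hB).union (hpos.finite_inter_range_of_isBounded hB)

theorem stmt_7 :
    ∃ H : Set ℝ, ¬(BddBelow H ∧ BddAbove H) ∧
      (∀ x : ℝ, ¬ AccPt x (𝓟 H)) ∧ AccPt 0 (𝓟 (msaa H)) := by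
  refine ⟨range negNat ∪ range natAddTwoDiv, fun ⟨_, hbdd⟩ => ?_,
    not_accPt_of_finite_inter_isBounded fun _ => finite_inter_range_negNat_union_natAddTwoDiv, ?_⟩
  · exact not_bddAbove_of_tendsto_atTop tendsto_natAddTwoDiv_atTop (hbdd.mono subset_union_right)
  · refine accPt_of_tendsto tendsto_one_div_add_atTop_nhds_zero_nat (.of_forall fun n => ⟨?_, ?_⟩)
    · positivity
    · exact ⟨_, .inl ⟨n, rfl⟩, _, .inr ⟨n, rfl⟩, (midpoint_negNat_natAddTwoDiv n).symm⟩
end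

section
/- Let H, K ⊆ ℝ be Borel measurable with λ(H △ K) = d, where △ is symmetric difference. For z ∈ ℝ let H_z = {(x,y) ∈ H × H : (x+y)/2 = z} and similarly K_z, and let λ₁ denote 1-dimensional Hausdorff measure in the plane. Then |λ₁(H_z) − λ₁(K_z)| ≤ 2√2·d. -/
/-!
With the sup metric on `ℝ × ℝ`, both parametrisations `x ↦ (x, 2z - x)` and `x ↦ (2z - x, x)`
of the line `x + y = 2z` are isometries, so they carry `λ` to `μH[1]`. A point of `H_z` outside
`K_z` has a coordinate in `H \ K`, hence lies in the image of `H \ K` under one of the two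
parametrisations; this gives `μH[1] H_z ≤ μH[1] K_z + 2 λ(H \ K)`, and `2 ≤ 2√2`.
-/

open Set MeasureTheory

def midpointFiber (H : Set ℝ) (z : ℝ) : Set (ℝ × ℝ) :=
  {p | p.1 ∈ H ∧ p.2 ∈ H ∧ (p.1 + p.2) / 2 = z}

lemma isometry_prodMk_const_sub (c : ℝ) : Isometry fun x : ℝ => (x, c - x) :=
  Isometry.of_dist_eq fun x y => by
    rw [Prod.dist_eq, dist_sub_left, max_self]

lemma isometry_prodMk_const_sub_swap (c : ℝ) : Isometry fun x : ℝ => (c - x, x) :=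
  Isometry.of_dist_eq fun x y => by
    rw [Prod.dist_eq, dist_sub_left, max_self]

lemma hausdorffMeasure_one_image_eq_volume {X : Type*} [EMetricSpace X] [MeasurableSpace X]
    [BorelSpace X] {f : ℝ → X} (hf : Isometry f) (s : Set ℝ) :
    μH[1] (f '' s) = volume s := by
  rw [hf.hausdorffMeasure_image (Or.inl zero_le_one), hausdorffMeasure_real]

lemma midpointFiber_diff_subset (H K : Set ℝ) (z : ℝ) :
    midpointFiber H z \ midpointFiber K z ⊆
      (fun x => (x, 2 * z - x)) '' (H \ K) ∪ (fun x => (2 * z - x, x)) '' (H \ K) := by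
  rintro ⟨x, y⟩ ⟨⟨hx, hy, hxy⟩, hK⟩
  have hy_eq : y = 2 * z - x := by linarith
  by_cases hxK : x ∈ K
  · have hyK : y ∉ K := fun hyK => hK ⟨hxK, hyK, hxy⟩
    exact Or.inr ⟨y, ⟨hy, hyK⟩, by simp [hy_eq]⟩
  · exact Or.inl ⟨x, ⟨hx, hxK⟩, by simp [hy_eq]⟩

lemma hausdorffMeasure_midpointFiber_le (H K : Set ℝ) (z : ℝ) :
    μH[1] (midpointFiber H z) ≤ μH[1] (midpointFiber K z) + 2 * volume (H \ K) := by
  calc μH[1] (midpointFiber H z)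
      ≤ μH[1] (midpointFiber K z) + μH[1] (midpointFiber H z \ midpointFiber K z) :=
        (measure_le_inter_add_sdiff _ _ _).trans (by gcongr; exact inter_subset_right)
    _ ≤ μH[1] (midpointFiber K z) + (μH[1] ((fun x => (x, 2 * z - x)) '' (H \ K)) +
          μH[1] ((fun x => (2 * z - x, x)) '' (H \ K))) := by
        gcongr
        exact (measure_mono (midpointFiber_diff_subset H K z)).trans (measure_union_le _ _)
    _ = μH[1] (midpointFiber K z) + 2 * volume (H \ K) := by
        rw [hausdorffMeasure_one_image_eq_volume (isometry_prodMk_const_sub _),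
          hausdorffMeasure_one_image_eq_volume (isometry_prodMk_const_sub_swap _), two_mul]

lemma two_le_ofReal_two_mul_sqrt_two : (2 : ENNReal) ≤ ENNReal.ofReal (2 * Real.sqrt 2) := by
  rw [← ENNReal.ofReal_ofNat]
  apply ENNReal.ofReal_le_ofReal
  nlinarith [Real.one_le_sqrt.mpr (by norm_num : (1 : ℝ) ≤ 2)]

theorem stmt_10_general (H K : Set ℝ)
    (d : ENNReal) (hd : volume (symmDiff H K) = d) (z : ℝ) :
    μH[1] {p : ℝ × ℝ | p.1 ∈ H ∧ p.2 ∈ H ∧ (p.1 + p.2) / 2 = z} ≤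
      μH[1] {p : ℝ × ℝ | p.1 ∈ K ∧ p.2 ∈ K ∧ (p.1 + p.2) / 2 = z}
        + ENNReal.ofReal (2 * Real.sqrt 2) * d ∧
    μH[1] {p : ℝ × ℝ | p.1 ∈ K ∧ p.2 ∈ K ∧ (p.1 + p.2) / 2 = z} ≤
      μH[1] {p : ℝ × ℝ | p.1 ∈ H ∧ p.2 ∈ H ∧ (p.1 + p.2) / 2 = z}
        + ENNReal.ofReal (2 * Real.sqrt 2) * d := by
  have key : ∀ A B : Set ℝ, volume (A \ B) ≤ d → μH[1] (midpointFiber A z) ≤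
      μH[1] (midpointFiber B z) + ENNReal.ofReal (2 * Real.sqrt 2) * d :=
    fun A B hAB => (hausdorffMeasure_midpointFiber_le A B z).trans
      (by gcongr; exact two_le_ofReal_two_mul_sqrt_two)
  rw [symmDiff_def] at hd
  exact ⟨key H K (hd ▸ measure_mono subset_union_left),
    key K H (hd ▸ measure_mono subset_union_right)⟩

theorem stmt_10 (H K : Set ℝ) (hH : MeasurableSet H) (hK : MeasurableSet K)
    (d : ENNReal) (hd : volume (symmDiff H K) = d) (z : ℝ) :
    μH[1] {p : ℝ × ℝ | p.1 ∈ H ∧ p.2 ∈ H ∧ (p.1 + p.2) / 2 = z} ≤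
      μH[1] {p : ℝ × ℝ | p.1 ∈ K ∧ p.2 ∈ K ∧ (p.1 + p.2) / 2 = z}
        + ENNReal.ofReal (2 * Real.sqrt 2) * d ∧
    μH[1] {p : ℝ × ℝ | p.1 ∈ K ∧ p.2 ∈ K ∧ (p.1 + p.2) / 2 = z} ≤
      μH[1] {p : ℝ × ℝ | p.1 ∈ H ∧ p.2 ∈ H ∧ (p.1 + p.2) / 2 = z}
        + ENNReal.ofReal (2 * Real.sqrt 2) * d :=
  stmt_10_general H K d hd z
end

section
/- Let H ⊆ ℝ be bounded and Borel measurable. Define g : ℝ → ℝ by g(z) = λ({x ∈ H : 2z − x ∈ H, x ≤ z}), Lebesgue measure of z⁻. Then g is continuous on ℝ. -/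
open Set MeasureTheory Filter Topology
open scoped ENNReal symmDiff

/-! Write `z⁻ = H ∩ (2z - H) ∩ (-∞, z]`. As `z → z₀`, the reflected copies `2z - H` converge to
`2z₀ - H` in measure (continuity of translation in `L¹`), and the half-lines `(-∞, z]` differ from
`(-∞, z₀]` by a set of measure `|z - z₀|`. Hence `λ(z⁻ ∆ z₀⁻) → 0`, and since `H` has finite
measure this forces `λ(z⁻) → λ(z₀⁻)`. -/

theorem Set.inter_symmDiff_inter_subset {α : Type*} (s₁ s₂ t₁ t₂ : Set α) :
    (s₁ ∩ t₁) ∆ (s₂ ∩ t₂) ⊆ s₁ ∆ s₂ ∪ t₁ ∆ t₂ := by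
  intro x
  simp only [mem_symmDiff, mem_inter_iff, mem_union]
  tauto

theorem Real.volume_Iic_symmDiff_Iic (a b : ℝ) :
    volume (Iic a ∆ Iic b) = ENNReal.ofReal |a - b| := by
  rw [Set.symmDiff_def, Iic_sdiff_Iic, Iic_sdiff_Iic, Ioc_union_Ioc_symm,
    Real.volume_Ioc, max_sub_min_eq_abs]

namespace MeasureTheory

theorem tendsto_measure_of_tendsto_measure_symmDiff {α ι : Type*} [MeasurableSpace α]
    {μ : Measure α} {l : Filter ι} {s : ι → Set α} {t : Set α} (ht : μ t ≠ ∞)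
    (h : Tendsto (fun i => μ (s i ∆ t)) l (𝓝 0)) : Tendsto (fun i => μ (s i)) l (𝓝 (μ t)) := by
  have upper : ∀ i, μ (s i) ≤ μ t + μ (s i ∆ t) := fun i =>
    tsub_le_iff_left.1 le_measure_symmDiff
  have lower : ∀ i, μ t - μ (s i ∆ t) ≤ μ (s i) := fun i =>
    tsub_le_iff_tsub_le.1 (symmDiff_comm (s i) t ▸ le_measure_symmDiff)
  refine tendsto_of_tendsto_of_tendsto_of_le_of_le ?_ ?_ lower upper
  · simpa using ENNReal.Tendsto.sub tendsto_const_nhds h (Or.inl ht)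
  · simpa using tendsto_const_nhds.add h

theorem tendsto_measure_sub_left_preimage_symmDiff {G : Type*} [AddGroup G] [TopologicalSpace G]
    [IsTopologicalAddGroup G] [MeasurableSpace G] [BorelSpace G] (μ : Measure G)
    [μ.IsAddLeftInvariant] [μ.IsNegInvariant] [μ.InnerRegularCompactLTTop]
    [IsLocallyFiniteMeasure μ] {s : Set G} (hs : NullMeasurableSet s μ) (hμs : μ s ≠ ∞)
    (c₀ : G) : Tendsto (fun c => μ (((c - ·) ⁻¹' s) ∆ ((c₀ - ·) ⁻¹' s))) (𝓝 c₀) (𝓝 0) := by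
  let subLeft : C(G, C(G, G)) := ContinuousMap.curry ⟨fun p : G × G => p.1 - p.2, continuous_sub⟩
  exact tendsto_measure_symmDiff_preimage_nhds_zero (f := subLeft) (g := subLeft c₀)
    (subLeft.continuous.tendsto c₀) (.of_forall (Measure.measurePreserving_sub_left μ))
    (Measure.measurePreserving_sub_left μ c₀) hs hμs

end MeasureTheory

theorem stmt_11 (H : Set ℝ) (hH : MeasurableSet H)
    (hbb : BddBelow H) (hba : BddAbove H) :
    Continuous fun z : ℝ => (volume {x | x ∈ H ∧ 2 * z - x ∈ H ∧ x ≤ z}).toReal := by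
  have hH_fin : volume H ≠ ∞ :=
    (isBounded_iff_bddBelow_bddAbove.2 ⟨hbb, hba⟩).measure_lt_top.ne
  set A : ℝ → Set ℝ := fun z => H ∩ ((2 * z - ·) ⁻¹' H ∩ Iic z)
  refine continuous_iff_continuousAt.2 fun z₀ => (ENNReal.tendsto_toReal ?_).comp ?_
  · exact measure_ne_top_of_subset inter_subset_left hH_fin
  have h_reflect : Tendsto (fun z => volume (((2 * z - ·) ⁻¹' H) ∆ ((2 * z₀ - ·) ⁻¹' H)))
      (𝓝 z₀) (𝓝 0) :=
    (tendsto_measure_sub_left_preimage_symmDiff volume hH.nullMeasurableSet hH_fin _).comp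
      ((continuous_const_mul 2).tendsto z₀)
  have h_Iic : Tendsto (fun z => volume (Iic z ∆ Iic z₀)) (𝓝 z₀) (𝓝 0) := by
    simp_rw [Real.volume_Iic_symmDiff_Iic]
    simpa using ENNReal.tendsto_ofReal ((continuous_sub_right z₀).abs.tendsto z₀)
  refine tendsto_measure_of_tendsto_measure_symmDiff
    (measure_ne_top_of_subset inter_subset_left hH_fin) ?_
  refine tendsto_of_tendsto_of_tendsto_of_le_of_le tendsto_const_nhds
    (by simpa using h_reflect.add h_Iic) (fun _ => zero_le) fun z => ?_
  calc volume (A z ∆ A z₀)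
      ≤ volume (((2 * z - ·) ⁻¹' H) ∆ ((2 * z₀ - ·) ⁻¹' H) ∪ Iic z ∆ Iic z₀) := by
        refine measure_mono ?_
        rw [← inter_symmDiff_distrib_left]
        exact inter_subset_right.trans (inter_symmDiff_inter_subset _ _ _ _)
    _ ≤ _ := measure_union_le _ _
end

section
/- Let H ⊆ ℝ be Lebesgue measurable with 0 < λ(H) < ∞ and suppose p ∈ MS^hf(H) = {x : λ(H ∩ (−∞, x]) = λ(H ∩ [x, ∞))}. Then MS^hf(H) = {p} if and only if for all δ > 0, λ(H ∩ (p−δ, p)) > 0 and λ(H ∩ (p, p+δ)) > 0. -/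
/-!
Cutting at `a ≤ b` gives `μ (Iic b) = μ (Iic a) + μ (Ioc a b)` and
`μ (Ici a) = μ (Ici b) + μ (Ico a b)`. If `a` and `b` both split the (finite) mass in half, the
two pieces of `(a, b)` must therefore be null; conversely, when `(a, b)` is null and there are no
atoms, moving the cut from `a` to `b` changes neither side, so `b` splits the mass iff `a` does.
-/

open Set MeasureTheory

/-- The paper's `MS^hf(H)` is `medianSet (volume.restrict H)`. -/
def medianSet {α : Type*} [Preorder α] [MeasurableSpace α] (μ : Measure α) : Set α :=
  {x | μ (Iic x) = μ (Ici x)}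

section LinearOrder

variable {α : Type*} [LinearOrder α] [TopologicalSpace α] [OrderClosedTopology α]
  [MeasurableSpace α] [OpensMeasurableSpace α] {μ : Measure α} {a b : α}

theorem measure_Iic_eq_add_measure_Ioc (μ : Measure α) (hab : a ≤ b) :
    μ (Iic b) = μ (Iic a) + μ (Ioc a b) := by
  rw [← Iic_union_Ioc_eq_Iic hab, measure_union (Iic_disjoint_Ioc le_rfl) measurableSet_Ioc]

theorem measure_Ici_eq_add_measure_Ico (μ : Measure α) (hab : a ≤ b) :
    μ (Ici a) = μ (Ici b) + μ (Ico a b) := by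
  rw [← Ico_union_Ici_eq_Ici hab, union_comm,
    measure_union ((Iio_disjoint_Ici le_rfl).mono_left Ico_subset_Iio_self).symm measurableSet_Ico]

theorem measure_Ioo_eq_zero_of_mem_medianSet (ha : a ∈ medianSet μ) (hb : b ∈ medianSet μ)
    (hfin : μ (Iic a) ≠ ⊤) : μ (Ioo a b) = 0 := by
  rcases le_total a b with hab | hba
  · have hsum : μ (Iic a) + (μ (Ioc a b) + μ (Ico a b)) = μ (Iic a) + 0 := by
      calc μ (Iic a) + (μ (Ioc a b) + μ (Ico a b))
          = μ (Iic b) + μ (Ico a b) := by rw [measure_Iic_eq_add_measure_Ioc μ hab, add_assoc]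
        _ = μ (Ici a) := by rw [hb, measure_Ici_eq_add_measure_Ico μ hab]
        _ = μ (Iic a) + 0 := by rw [ha, add_zero]
    have hIoc : μ (Ioc a b) = 0 := (add_eq_zero.1 (ENNReal.add_right_inj hfin |>.1 hsum)).1
    exact measure_mono_null Ioo_subset_Ioc_self hIoc
  · rw [Ioo_eq_empty hba.not_gt, measure_empty]

theorem mem_medianSet_iff_of_measure_Ioo_eq_zero [NullSingletonClass μ] (hab : a ≤ b)
    (h : μ (Ioo a b) = 0) : a ∈ medianSet μ ↔ b ∈ medianSet μ := by
  have hIic : μ (Iic b) = μ (Iic a) := by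
    rw [measure_Iic_eq_add_measure_Ioc μ hab, ← measure_congr Ioo_ae_eq_Ioc, h, add_zero]
  have hIci : μ (Ici a) = μ (Ici b) := by
    rw [measure_Ici_eq_add_measure_Ico μ hab, ← measure_congr Ioo_ae_eq_Ico, h, add_zero]
  simp only [medianSet, mem_ofPred_eq, hIic, hIci]

end LinearOrder

theorem medianSet_eq_singleton_iff {μ : Measure ℝ} [NullSingletonClass μ] [IsFiniteMeasure μ]
    {p : ℝ} (hp : p ∈ medianSet μ) :
    medianSet μ = {p} ↔ ∀ δ > 0, 0 < μ (Ioo (p - δ) p) ∧ 0 < μ (Ioo p (p + δ)) := by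
  constructor
  · intro hset δ hδ
    have not_mem : ∀ x ≠ p, x ∉ medianSet μ := fun x hx hmem => hx (by rwa [hset] at hmem)
    refine ⟨pos_iff_ne_zero.2 fun h => ?_, pos_iff_ne_zero.2 fun h => ?_⟩
    · exact not_mem (p - δ) (by linarith)
        ((mem_medianSet_iff_of_measure_Ioo_eq_zero (by linarith) h).2 hp)
    · exact not_mem (p + δ) (by linarith)
        ((mem_medianSet_iff_of_measure_Ioo_eq_zero (by linarith) h).1 hp)
  · intro hpos
    refine eq_singleton_iff_unique_mem.2 ⟨hp, fun x hx => ?_⟩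
    by_contra hxp
    rcases lt_or_gt_of_ne hxp with hlt | hgt
    · have h := measure_Ioo_eq_zero_of_mem_medianSet hx hp (measure_ne_top μ _)
      exact (hpos (p - x) (by linarith)).1.ne' (by rwa [sub_sub_cancel])
    · have h := measure_Ioo_eq_zero_of_mem_medianSet hp hx (measure_ne_top μ _)
      exact (hpos (x - p) (by linarith)).2.ne' (by rwa [add_sub_cancel])

theorem stmt_16_general (H : Set ℝ)
    (hfin : volume H < ⊤) (p : ℝ)
    (hp : p ∈ {x : ℝ | volume (H ∩ Set.Iic x) = volume (H ∩ Set.Ici x)}) :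
    {x : ℝ | volume (H ∩ Set.Iic x) = volume (H ∩ Set.Ici x)} = {p} ↔
      ∀ δ > 0, 0 < volume (H ∩ Set.Ioo (p - δ) p) ∧
        0 < volume (H ∩ Set.Ioo p (p + δ)) := by
  have : IsFiniteMeasure (volume.restrict H) := isFiniteMeasure_restrict.2 hfin.ne
  have restrict_eq {s : Set ℝ} (hs : MeasurableSet s) :
      volume.restrict H s = volume (H ∩ s) := by
    rw [Measure.restrict_apply hs, inter_comm]
  have hmedian : {x : ℝ | volume (H ∩ Iic x) = volume (H ∩ Ici x)} =
      medianSet (volume.restrict H) := by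
    simp only [medianSet, restrict_eq measurableSet_Iic, restrict_eq measurableSet_Ici]
  rw [hmedian] at hp ⊢
  simpa only [restrict_eq measurableSet_Ioo] using medianSet_eq_singleton_iff hp

theorem stmt_16 (H : Set ℝ) (hH : MeasurableSet H)
    (h0 : 0 < volume H) (hfin : volume H < ⊤) (p : ℝ)
    (hp : p ∈ {x : ℝ | volume (H ∩ Set.Iic x) = volume (H ∩ Set.Ici x)}) :
    {x : ℝ | volume (H ∩ Set.Iic x) = volume (H ∩ Set.Ici x)} = {p} ↔
      ∀ δ > 0, 0 < volume (H ∩ Set.Ioo (p - δ) p) ∧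
        0 < volume (H ∩ Set.Ioo p (p + δ)) :=
  stmt_16_general H hfin p hp
end

section
/- Let K : ℝ × ℝ → ℝ be a continuous strictly internal mean (a < K(a,b) < b whenever a < b, and K(a,b) = K(b,a)). For a < b define iteratively the finite sets S₁ = {a, b, K(a,b)} and Sₙ₊₁ = Sₙ ∪ {K(s,t) : s,t consecutive elements of Sₙ}, and let S_∞ = ⋃ₙ Sₙ. Then S_∞ is dense in [a, b]. -/
/-!
Suppose `x ∈ [a, b]` is not in the closure of `S_∞`. Let `sₙ < x < tₙ` be the neighbours of `x`
in `Sₙ`; then `sₙ` increases to some `L ≤ x` and `tₙ` decreases to some `M ≥ x`. The point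
`K(sₙ, tₙ)` lies in `Sₙ₊₁`, hence outside `(sₙ₊₁, tₙ₊₁) ⊇ (L, M)`, so by continuity `K(L, M)` lies
outside `(L, M)`. Strict internality forces `L = M = x`, and then `sₙ → x` puts `x` in the closure.
-/

open Set

/-- Given a two-variable mean `K` and a set `F`, the set of values of `K` on
consecutive (neighbouring) pairs of elements of `F`. -/
def Kbar (K : ℝ → ℝ → ℝ) (F : Set ℝ) : Set ℝ :=
  {z | ∃ s ∈ F, ∃ t ∈ F, s < t ∧ (∀ u ∈ F, u ≤ s ∨ t ≤ u) ∧ z = K s t}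

/-- The iterated subdivision sets `S₁ = {a, b, K(a,b)}`, `Sₙ₊₁ = Sₙ ∪ K̄(Sₙ)`. -/
def iterSet (K : ℝ → ℝ → ℝ) (a b : ℝ) : ℕ → Set ℝ
  | 0 => {a, b, K a b}
  | n + 1 => iterSet K a b n ∪ Kbar K (iterSet K a b n)

open Filter Topology

-- The neighbours of `x` in `F`; junk values unless `F` is finite with elements on that side of `x`.
noncomputable def lowerNeighbor (F : Set ℝ) (x : ℝ) : ℝ := sSup (F ∩ Iic x)
noncomputable def upperNeighbor (F : Set ℝ) (x : ℝ) : ℝ := sInf (F ∩ Ici x)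

section Neighbors

variable {F G : Set ℝ} {x u : ℝ}

lemma lowerNeighbor_mem (hF : F.Finite) (hu : u ∈ F) (hux : u ≤ x) :
    lowerNeighbor F x ∈ F ∩ Iic x :=
  Nonempty.csSup_mem ⟨u, hu, hux⟩ (hF.inter_of_left _)

lemma upperNeighbor_mem (hF : F.Finite) (hu : u ∈ F) (hxu : x ≤ u) :
    upperNeighbor F x ∈ F ∩ Ici x :=
  Nonempty.csInf_mem ⟨u, hu, hxu⟩ (hF.inter_of_left _)

lemma le_lowerNeighbor (hF : F.Finite) (hu : u ∈ F) (hux : u ≤ x) : u ≤ lowerNeighbor F x :=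
  le_csSup (hF.inter_of_left _).bddAbove ⟨hu, hux⟩

lemma upperNeighbor_le (hF : F.Finite) (hu : u ∈ F) (hxu : x ≤ u) : upperNeighbor F x ≤ u :=
  csInf_le (hF.inter_of_left _).bddBelow ⟨hu, hxu⟩

lemma le_lowerNeighbor_or_upperNeighbor_le (hF : F.Finite) (hu : u ∈ F) :
    u ≤ lowerNeighbor F x ∨ upperNeighbor F x ≤ u :=
  (le_total u x).imp (le_lowerNeighbor hF hu) (upperNeighbor_le hF hu)

lemma lowerNeighbor_lt (hF : F.Finite) (hu : u ∈ F) (hux : u ≤ x) (hx : x ∉ F) :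
    lowerNeighbor F x < x := by
  obtain ⟨hmem, hle⟩ := lowerNeighbor_mem hF hu hux
  exact hle.lt_of_ne fun h => hx (h ▸ hmem)

lemma lt_upperNeighbor (hF : F.Finite) (hu : u ∈ F) (hxu : x ≤ u) (hx : x ∉ F) :
    x < upperNeighbor F x := by
  obtain ⟨hmem, hle⟩ := upperNeighbor_mem hF hu hxu
  exact hle.lt_of_ne' fun h => hx (h ▸ hmem)

lemma lowerNeighbor_mono (hG : G.Finite) (hFG : F ⊆ G) (hu : u ∈ F) (hux : u ≤ x) :
    lowerNeighbor F x ≤ lowerNeighbor G x :=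
  have hmem := lowerNeighbor_mem (hG.subset hFG) hu hux
  le_lowerNeighbor hG (hFG hmem.1) hmem.2

lemma upperNeighbor_anti (hG : G.Finite) (hFG : F ⊆ G) (hu : u ∈ F) (hxu : x ≤ u) :
    upperNeighbor G x ≤ upperNeighbor F x :=
  have hmem := upperNeighbor_mem (hG.subset hFG) hu hxu
  upperNeighbor_le hG (hFG hmem.1) hmem.2

lemma apply_neighbors_mem_Kbar (K : ℝ → ℝ → ℝ) {a b : ℝ} (hF : F.Finite) (ha : a ∈ F)
    (hax : a ≤ x) (hb : b ∈ F) (hxb : x ≤ b) (hx : x ∉ F) :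
    K (lowerNeighbor F x) (upperNeighbor F x) ∈ Kbar K F :=
  ⟨_, (lowerNeighbor_mem hF ha hax).1, _, (upperNeighbor_mem hF hb hxb).1,
    (lowerNeighbor_lt hF ha hax hx).trans (lt_upperNeighbor hF hb hxb hx),
    fun _ hu => le_lowerNeighbor_or_upperNeighbor_le hF hu, rfl⟩

end Neighbors

section IterSet

variable (K : ℝ → ℝ → ℝ) (a b : ℝ)

lemma iterSet_finite (n : ℕ) : (iterSet K a b n).Finite := by
  induction n with
  | zero => exact (((finite_singleton _).insert _).insert _)
  | succ n ih =>
    refine ih.union (((ih.prod ih).image fun p => K p.1 p.2).subset ?_)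
    rintro _ ⟨s, hs, t, ht, -, -, rfl⟩
    exact ⟨(s, t), ⟨hs, ht⟩, rfl⟩

lemma iterSet_mono : Monotone (iterSet K a b) :=
  monotone_nat_of_le_succ fun _ => subset_union_left

lemma left_mem_iterSet (n : ℕ) : a ∈ iterSet K a b n :=
  iterSet_mono K a b n.zero_le (by simp [iterSet])

lemma right_mem_iterSet (n : ℕ) : b ∈ iterSet K a b n :=
  iterSet_mono K a b n.zero_le (by simp [iterSet])

end IterSet

lemma le_of_mean_escapes {K : ℝ → ℝ → ℝ} (hcont : Continuous fun p : ℝ × ℝ => K p.1 p.2)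
    (hstrict : ∀ a b : ℝ, a < b → a < K a b ∧ K a b < b) {s t : ℕ → ℝ} {L M : ℝ}
    (hs : Monotone s) (ht : Antitone t) (hsL : Tendsto s atTop (𝓝 L))
    (htM : Tendsto t atTop (𝓝 M))
    (hescape : ∀ n, K (s n) (t n) ≤ s (n + 1) ∨ t (n + 1) ≤ K (s n) (t n)) : M ≤ L := by
  by_contra! hLM
  have hK : Tendsto (fun n => K (s n) (t n)) atTop (𝓝 (K L M)) :=
    (hcont.tendsto (L, M)).comp (hsL.prodMk_nhds htM)
  obtain ⟨n, hn⟩ := (hK.eventually (isOpen_Ioo.mem_nhds (hstrict L M hLM))).exists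
  rcases hescape n with h | h
  · exact (h.trans (hs.ge_of_tendsto hsL _)).not_gt hn.1
  · exact ((ht.le_of_tendsto htM _).trans h).not_gt hn.2

theorem stmt_18_general (K : ℝ → ℝ → ℝ)
    (hcont : Continuous fun p : ℝ × ℝ => K p.1 p.2)
    (hstrict : ∀ a b : ℝ, a < b → a < K a b ∧ K a b < b)
    (a b : ℝ) :
    Set.Icc a b ⊆ closure (⋃ n : ℕ, iterSet K a b n) := by
  intro x ⟨hax, hxb⟩
  by_contra hxc
  have hxS : ∀ n, x ∉ iterSet K a b n := fun n h => hxc (subset_closure (mem_iUnion_of_mem n h))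
  have hfin := iterSet_finite K a b
  have ha := left_mem_iterSet K a b
  have hb := right_mem_iterSet K a b
  set s := fun n => lowerNeighbor (iterSet K a b n) x
  set t := fun n => upperNeighbor (iterSet K a b n) x
  have hs : Monotone s := monotone_nat_of_le_succ fun n =>
    lowerNeighbor_mono (hfin _) (iterSet_mono K a b n.le_succ) (ha n) hax
  have ht : Antitone t := antitone_nat_of_succ_le fun n =>
    upperNeighbor_anti (hfin _) (iterSet_mono K a b n.le_succ) (hb n) hxb
  have hsx : ∀ n, s n ≤ x := fun n => (lowerNeighbor_mem (hfin n) (ha n) hax).2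
  have hxt : ∀ n, x ≤ t n := fun n => (upperNeighbor_mem (hfin n) (hb n) hxb).2
  have hsL := tendsto_atTop_ciSup hs ⟨x, forall_mem_range.2 hsx⟩
  have htM := tendsto_atTop_ciInf ht ⟨x, forall_mem_range.2 hxt⟩
  have hML : ⨅ n, t n ≤ ⨆ n, s n := le_of_mean_escapes hcont hstrict hs ht hsL htM fun n =>
    le_lowerNeighbor_or_upperNeighbor_le (hfin (n + 1))
      (Or.inr (apply_neighbors_mem_Kbar K (hfin n) (ha n) hax (hb n) hxb (hxS n)))
  have hLx : ⨆ n, s n = x := le_antisymm (ciSup_le hsx) (hML.trans' (le_ciInf hxt))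
  exact hxc (mem_closure_of_tendsto (hLx ▸ hsL)
    (Eventually.of_forall fun n => mem_iUnion_of_mem n (lowerNeighbor_mem (hfin n) (ha n) hax).1))

theorem stmt_18 (K : ℝ → ℝ → ℝ)
    (hcont : Continuous fun p : ℝ × ℝ => K p.1 p.2)
    (hsymm : ∀ a b : ℝ, K a b = K b a)
    (hstrict : ∀ a b : ℝ, a < b → a < K a b ∧ K a b < b)
    (a b : ℝ) (hab : a < b) :
    Set.Icc a b ⊆ closure (⋃ n : ℕ, iterSet K a b n) :=
  stmt_18_general K hcont hstrict a b
end

section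
/- Let H ⊆ ℝ be a bounded countably infinite set. Then MS^a(H) = [liminf H, limsup H], where MS^a(H) is the set of all x ∈ ℝ for which there exists an increasing sequence of finite sets H₁ ⊆ H₂ ⊆ ... with ⋃ₙ Hₙ = H and the arithmetic means A(Hₙ) converging to x. -/
/-!
If `t < liminf H`, only finitely many points of `H` lie below `t`; their total deficit below `t`
is a constant `C`, so `A(Hₙ) ≥ t - C / |Hₙ|`, and `|Hₙ| → ∞` gives `t ≤ lim A(Hₙ)`. The upper
bound is the same statement for `-H`.

Conversely, for `H ⊆ [a, b]`, adding to a finite `F ⊆ H` new points of `H` close to an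
accumulation point `c`, one at a time, moves the mean in steps of size at most
`(b - a) / (|F| + 1)` until it is close to `c`, so on the way it comes close to every `x` between
`A(F)` and `c`. Enumerate `H`; at stage `n` insert the next point, pad to at least `n` elements,
and steer the mean back to `x` using `c = liminf H` or `c = limsup H`. The error at stage `n` is
`O(1 / n)`.
-/

open Set Filter Topology

noncomputable def amean (F : Finset ℝ) : ℝ := (∑ y ∈ F, y) / F.card

lemma card_mul_amean (F : Finset ℝ) : (F.card : ℝ) * amean F = ∑ y ∈ F, y := by
  rcases F.eq_empty_or_nonempty with rfl | hF
  · simp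
  · exact mul_div_cancel₀ _ (by exact_mod_cast hF.card_pos.ne')

lemma amean_mem_Icc {F : Finset ℝ} (hF : F.Nonempty) {a b : ℝ} (h : ∀ y ∈ F, y ∈ Icc a b) :
    amean F ∈ Icc a b := by
  have hm : (0 : ℝ) < F.card := by exact_mod_cast hF.card_pos
  have hlo := Finset.card_nsmul_le_sum F id a fun y hy => (h y hy).1
  have hhi := Finset.sum_le_card_nsmul F id b fun y hy => (h y hy).2
  simp only [nsmul_eq_mul, id] at hlo hhi
  exact ⟨(le_div_iff₀ hm).2 (by linarith), (div_le_iff₀ hm).2 (by linarith)⟩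

lemma amean_insert_sub {F : Finset ℝ} {y : ℝ} (hy : y ∉ F) :
    amean (insert y F) - amean F = (y - amean F) / (F.card + 1) := by
  have hm : (F.card : ℝ) + 1 ≠ 0 := by positivity
  have h := card_mul_amean (insert y F)
  rw [Finset.sum_insert hy, Finset.card_insert_of_notMem hy, ← card_mul_amean F] at h
  push_cast at h
  rw [eq_div_iff hm]
  linarith

lemma abs_amean_insert_sub_le {F : Finset ℝ} (hF : F.Nonempty) {y a b : ℝ}
    (hFab : ∀ z ∈ F, z ∈ Icc a b) (hy : y ∈ Icc a b) (hyF : y ∉ F) :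
    |amean (insert y F) - amean F| ≤ (b - a) / (F.card + 1) := by
  have hA := amean_mem_Icc hF hFab
  rw [amean_insert_sub hyF, abs_div, abs_of_pos (by positivity : (0 : ℝ) < F.card + 1)]
  gcongr
  exact abs_sub_le_iff.2 ⟨by linarith [hy.2, hA.1], by linarith [hy.1, hA.2]⟩

lemma card_mul_abs_amean_sub_le (F : Finset ℝ) (c : ℝ) :
    F.card * |amean F - c| ≤ ∑ y ∈ F, |y - c| := by
  calc (F.card : ℝ) * |amean F - c| = |∑ y ∈ F, (y - c)| := by
        rw [Finset.sum_sub_distrib, ← card_mul_amean, Finset.sum_const, nsmul_eq_mul,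
          ← mul_sub, abs_mul, Nat.abs_cast]
    _ ≤ ∑ y ∈ F, |y - c| := Finset.abs_sum_le_sum_abs _ _

lemma amean_map_neg (F : Finset ℝ) :
    amean (F.map (Equiv.neg ℝ).toEmbedding) = -amean F := by
  simp only [amean, Finset.sum_map, Finset.card_map, Equiv.coe_toEmbedding, Equiv.neg_apply]
  rw [Finset.sum_neg_distrib, neg_div]

lemma derivedSet_subset_Icc {H : Set ℝ} {a b : ℝ} (hH : H ⊆ Icc a b) :
    derivedSet H ⊆ Icc a b :=
  (derivedSet_subset_closure H).trans (closure_minimal hH isClosed_Icc)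

lemma finite_inter_of_disjoint_derivedSet {X : Type*} [TopologicalSpace X] {H K : Set X}
    (hH : IsCompact (closure H)) (hK : IsClosed K) (hKH : Disjoint K (derivedSet H)) :
    (H ∩ K).Finite := by
  by_contra hinf
  obtain ⟨c, hcK, hc⟩ := Set.Infinite.exists_accPt_of_subset_isCompact hinf
    (hH.inter_right hK) (inter_subset_inter_left K subset_closure)
  exact hKH.notMem_of_mem_left hcK.2 (hc.mono (principal_mono.2 inter_subset_left))

lemma tendsto_card_atTop_of_infinite_iUnion {α : Type*} {G : ℕ → Finset α} (hG : Monotone G)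
    (hinf : (⋃ n, (G n : Set α)).Infinite) : Tendsto (fun n => (G n).card) atTop atTop := by
  refine tendsto_atTop_atTop_of_monotone (fun m n h => Finset.card_le_card (hG h)) fun N => ?_
  obtain ⟨T, hT, hTcard⟩ := hinf.exists_subset_card_eq N
  have hdir : Directed (· ⊆ ·) fun n => (G n : Set α) :=
    Monotone.directed_le fun _ _ h => Finset.coe_subset.2 (hG h)
  obtain ⟨n, hn⟩ := hdir.exists_mem_subset_of_finset_subset_biUnion hT
  exact ⟨n, hTcard ▸ Finset.card_le_card (Finset.coe_subset.1 hn)⟩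

lemma card_mul_sub_le_sum {H : Set ℝ} {t : ℝ} (hfin : (H ∩ Iic t).Finite) {F : Finset ℝ}
    (hF : ↑F ⊆ H) : F.card * t - ∑ y ∈ hfin.toFinset, (t - y) ≤ ∑ y ∈ F, y := by
  have hle : ∑ y ∈ F, (t - y) ≤ ∑ y ∈ hfin.toFinset, (t - y) := by
    calc ∑ y ∈ F, (t - y) ≤ ∑ y ∈ F with y ≤ t, (t - y) := by
          rw [Finset.sum_filter]
          exact Finset.sum_le_sum fun y _ => by split_ifs with h <;> linarith
      _ ≤ ∑ y ∈ hfin.toFinset, (t - y) := by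
          refine Finset.sum_le_sum_of_subset_of_nonneg (fun y hy => ?_) fun y hy _ => ?_
          · rw [Finset.mem_filter] at hy
            exact hfin.mem_toFinset.2 ⟨hF hy.1, hy.2⟩
          · exact sub_nonneg.2 (hfin.mem_toFinset.1 hy).2
  rw [Finset.sum_sub_distrib, Finset.sum_const, nsmul_eq_mul] at hle
  linarith

lemma ge_of_tendsto_amean {H : Set ℝ} {t x : ℝ} (hfin : (H ∩ Iic t).Finite)
    {G : ℕ → Finset ℝ} (hG : ∀ n, ↑(G n) ⊆ H) (hcard : Tendsto (fun n => (G n).card) atTop atTop)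
    (hlim : Tendsto (fun n => amean (G n)) atTop (𝓝 x)) : t ≤ x := by
  set C := ∑ y ∈ hfin.toFinset, (t - y)
  have hcard' : Tendsto (fun n => ((G n).card : ℝ)) atTop atTop :=
    tendsto_natCast_atTop_atTop.comp hcard
  have hlow : Tendsto (fun n => t - C / (G n).card) atTop (𝓝 t) := by
    simpa using tendsto_const_nhds.sub (hcard'.const_div_atTop C)
  refine le_of_tendsto_of_tendsto hlow hlim ?_
  filter_upwards [hcard'.eventually_gt_atTop 0] with n hn
  rw [amean, le_div_iff₀ hn, sub_mul, div_mul_cancel₀ _ hn.ne', mul_comm]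
  exact card_mul_sub_le_sum hfin (hG n)

lemma le_of_tendsto_amean {H : Set ℝ} {t x : ℝ} (hfin : (H ∩ Ici t).Finite)
    {G : ℕ → Finset ℝ} (hG : ∀ n, ↑(G n) ⊆ H) (hcard : Tendsto (fun n => (G n).card) atTop atTop)
    (hlim : Tendsto (fun n => amean (G n)) atTop (𝓝 x)) : x ≤ t := by
  have hfin' : (-H ∩ Iic (-t)).Finite := by
    simpa only [Set.inter_neg, Set.neg_Ici] using hfin.neg
  have h := ge_of_tendsto_amean hfin' (x := -x) (G := fun n => (G n).map (Equiv.neg ℝ).toEmbedding)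
    (fun n => by simpa using hG n) (by simpa using hcard)
    (by simp only [amean_map_neg]; exact hlim.neg)
  linarith

lemma mem_Icc_of_tendsto_amean {H : Set ℝ} {a b x : ℝ} (hH : H ⊆ Icc a b) (hinf : H.Infinite)
    {G : ℕ → Finset ℝ} (hG : Monotone G) (hGH : ⋃ n, (G n : Set ℝ) = H)
    (hlim : Tendsto (fun n => amean (G n)) atTop (𝓝 x)) :
    x ∈ Icc (sInf (derivedSet H)) (sSup (derivedSet H)) := by
  have hcl : IsCompact (closure H) :=
    isCompact_Icc.of_isClosed_subset isClosed_closure (closure_minimal hH isClosed_Icc)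
  have hD := derivedSet_subset_Icc hH
  have hsub (n : ℕ) : ↑(G n) ⊆ H := hGH ▸ subset_iUnion (fun n => (G n : Set ℝ)) n
  have hcard := tendsto_card_atTop_of_infinite_iUnion hG (hGH ▸ hinf)
  constructor
  · refine le_of_forall_lt_imp_le_of_dense fun t ht => ge_of_tendsto_amean ?_ hsub hcard hlim
    refine finite_inter_of_disjoint_derivedSet hcl isClosed_Iic (disjoint_left.2 fun c hct hc => ?_)
    exact (ht.trans_le (csInf_le (bddBelow_Icc.mono hD) hc)).not_ge hct
  · refine le_of_forall_gt_imp_ge_of_dense fun t ht => le_of_tendsto_amean ?_ hsub hcard hlim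
    refine finite_inter_of_disjoint_derivedSet hcl isClosed_Ici (disjoint_left.2 fun c hct hc => ?_)
    exact ((le_csSup (bddAbove_Icc.mono hD) hc).trans_lt ht).not_ge hct

lemma exists_abs_sub_le_of_mem_Icc {g : ℕ → ℝ} {δ x : ℝ} (hstep : ∀ k, |g (k + 1) - g k| ≤ δ)
    {K : ℕ} (hx : x ∈ Icc (g 0) (g K)) : ∃ k, |g k - x| ≤ δ := by
  classical
  have hex : ∃ k, x ≤ g k := ⟨K, hx.2⟩
  refine ⟨Nat.find hex, ?_⟩
  have hfind : x ≤ g (Nat.find hex) := Nat.find_spec hex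
  rcases hk : Nat.find hex with _ | j
  · rw [hk] at hfind
    rw [le_antisymm hx.1 hfind, sub_self, abs_zero]
    exact (abs_nonneg _).trans (hstep 0)
  · rw [hk] at hfind
    have hj : g j < x := not_le.1 (Nat.find_min hex (hk ▸ j.lt_succ_self))
    rw [abs_of_nonneg (sub_nonneg.2 hfind)]
    linarith [(abs_le.1 (hstep j)).2]

lemma exists_abs_sub_le_of_mem_uIcc {g : ℕ → ℝ} {δ x : ℝ} (hstep : ∀ k, |g (k + 1) - g k| ≤ δ)
    {K : ℕ} (hx : x ∈ uIcc (g 0) (g K)) : ∃ k, |g k - x| ≤ δ := by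
  rcases mem_uIcc.1 hx with ⟨h0, hK⟩ | ⟨hK, h0⟩
  · exact exists_abs_sub_le_of_mem_Icc hstep ⟨h0, hK⟩
  · obtain ⟨k, hk⟩ := exists_abs_sub_le_of_mem_Icc (g := fun k => -g k) (x := -x)
      (fun k => by simpa only [neg_sub_neg, abs_sub_comm] using hstep k)
      ⟨neg_le_neg h0, neg_le_neg hK⟩
    exact ⟨k, by simpa only [neg_sub_neg, abs_sub_comm] using hk⟩

lemma abs_amean_union_sub_le {F P : Finset ℝ} (hFP : Disjoint F P) (hP : P.Nonempty)
    {c r ε : ℝ} (hFr : ∀ y ∈ F, |y - c| ≤ r) (hPε : ∀ y ∈ P, |y - c| ≤ ε)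
    (hrε : F.card * r ≤ P.card * ε) : |amean (F ∪ P) - c| ≤ 2 * ε := by
  obtain ⟨p, hp⟩ := hP
  have hε : 0 ≤ ε := (abs_nonneg _).trans (hPε p hp)
  have hk : (0 : ℝ) < P.card := by exact_mod_cast Finset.card_pos.2 ⟨p, hp⟩
  have hsumF := Finset.sum_le_card_nsmul F _ r hFr
  have hsumP := Finset.sum_le_card_nsmul P _ ε hPε
  have h := card_mul_abs_amean_sub_le (F ∪ P) c
  rw [Finset.sum_union hFP, Finset.card_union_of_disjoint hFP] at h
  simp only [nsmul_eq_mul] at hsumF hsumP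
  push_cast at h
  refine le_of_mul_le_mul_left ?_ (by positivity : (0 : ℝ) < F.card + P.card)
  nlinarith

lemma exists_superset_seq_amean_approach {H : Set ℝ} {a b c ε : ℝ} (hH : H ⊆ Icc a b)
    (hc : c ∈ derivedSet H) (hε : 0 < ε) {F : Finset ℝ} (hF : ↑F ⊆ H) (hne : F.Nonempty) :
    ∃ G : ℕ → Finset ℝ, G 0 = F ∧ (∀ k, F ⊆ G k ∧ ↑(G k) ⊆ H) ∧
      (∀ k, |amean (G (k + 1)) - amean (G k)| ≤ (b - a) / (F.card + 1)) ∧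
      ∃ K, |amean (G K) - c| ≤ 2 * ε := by
  classical
  have hca : c ∈ Icc a b := derivedSet_subset_Icc hH hc
  have hs : ((H ∩ Metric.ball c ε) \ F).Infinite := by
    rw [inter_comm]
    exact (Set.Infinite.of_accPt (hc.nhds_inter (Metric.ball_mem_nhds c hε))).sdiff F.finite_toSet
  set q : ℕ → ℝ := fun i => hs.natEmbedding _ i
  have hq : q.Injective := Subtype.val_injective.comp (hs.natEmbedding _).injective
  have hqs (i : ℕ) : q i ∈ (H ∩ Metric.ball c ε) \ F := (hs.natEmbedding _ i).2
  have hdisj (k : ℕ) : Disjoint F ((Finset.range k).image q) :=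
    Finset.disjoint_right.2 fun y hy => by
      obtain ⟨i, -, rfl⟩ := Finset.mem_image.1 hy
      exact (hqs i).2
  have hGH (k : ℕ) : ↑(F ∪ (Finset.range k).image q) ⊆ H := by
    rw [Finset.coe_union, Finset.coe_image, union_subset_iff, image_subset_iff]
    exact ⟨hF, fun i _ => (hqs i).1.1⟩
  refine ⟨fun k => F ∪ (Finset.range k).image q, by simp,
    fun k => ⟨Finset.subset_union_left, hGH k⟩, fun k => ?_, ?_⟩
  · have hqG : q k ∉ F ∪ (Finset.range k).image q := by
      simpa [hq.eq_iff] using (hqs k).2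
    simp only [Finset.range_add_one, Finset.image_insert, Finset.union_insert]
    refine (abs_amean_insert_sub_le (hne.mono Finset.subset_union_left)
      (fun z hz => hH (hGH k hz)) (hH (hqs k).1.1) hqG).trans ?_
    have hab : 0 ≤ b - a := sub_nonneg.2 (hca.1.trans hca.2)
    gcongr
    exact Finset.subset_union_left
  · obtain ⟨N, hN⟩ := exists_nat_ge (F.card * (b - a) / ε)
    refine ⟨N + 1, abs_amean_union_sub_le (hdisj (N + 1)) (by simp) (r := b - a) (fun y hy => ?_)
      (fun y hy => ?_) ?_⟩
    · have hy := hH (hF hy)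
      exact abs_sub_le_iff.2 ⟨by linarith [hy.2, hca.1], by linarith [hy.1, hca.2]⟩
    · obtain ⟨i, -, rfl⟩ := Finset.mem_image.1 hy
      exact (Metric.mem_ball.1 (hqs i).1.2).le
    · rw [Finset.card_image_of_injective _ hq, Finset.card_range, ← div_le_iff₀ hε]
      push_cast
      linarith

lemma exists_superset_abs_amean_sub_le {H : Set ℝ} {a b c x ε : ℝ} (hH : H ⊆ Icc a b)
    (hc : c ∈ derivedSet H) (hε : 0 < ε) {F : Finset ℝ} (hF : ↑F ⊆ H) (hne : F.Nonempty)
    (hx : x ∈ uIcc (amean F) c) :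
    ∃ F', F ⊆ F' ∧ ↑F' ⊆ H ∧ |amean F' - x| ≤ (b - a) / (F.card + 1) + 2 * ε := by
  obtain ⟨G, hG0, hGH, hstep, K, hK⟩ := exists_superset_seq_amean_approach hH hc hε hF hne
  have hδ : 0 ≤ (b - a) / (F.card + 1) := (abs_nonneg _).trans (hstep 0)
  rw [← hG0] at hx
  rcases uIcc_subset_uIcc_union_uIcc (b := amean (G K)) hx with h | h
  · obtain ⟨k, hk⟩ := exists_abs_sub_le_of_mem_uIcc (g := fun k => amean (G k)) hstep h
    exact ⟨G k, (hGH k).1, (hGH k).2, hk.trans (le_add_of_nonneg_right (by positivity))⟩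
  · refine ⟨G K, (hGH K).1, (hGH K).2, ?_⟩
    have hxc := abs_sub_left_of_mem_uIcc h
    rw [abs_sub_comm, abs_sub_comm c] at hxc
    linarith

lemma exists_insert_subset_abs_amean_sub_le {H : Set ℝ} {a b c d x : ℝ} (hH : H ⊆ Icc a b)
    (hinf : H.Infinite) (hc : c ∈ derivedSet H) (hd : d ∈ derivedSet H) (hx : x ∈ Icc c d)
    (n : ℕ) {F : Finset ℝ} (hF : ↑F ⊆ H) {p : ℝ} (hp : p ∈ H) :
    ∃ F', insert p F ⊆ F' ∧ ↑F' ⊆ H ∧ |amean F' - x| ≤ (b - a + 2) / (n + 1) := by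
  classical
  obtain ⟨Q, hQH, hQ⟩ := hinf.exists_subset_card_eq n
  set F₁ := insert p F ∪ Q
  have hF₁H : ↑F₁ ⊆ H := by
    simpa [F₁, Set.insert_subset_iff, hp, hF] using hQH
  have hn : (n : ℝ) ≤ F₁.card := by
    exact_mod_cast hQ ▸ Finset.card_le_card Finset.subset_union_right
  obtain ⟨e, he, hx'⟩ : ∃ e ∈ derivedSet H, x ∈ uIcc (amean F₁) e := by
    rcases le_total x (amean F₁) with h | h
    · exact ⟨c, hc, mem_uIcc.2 (Or.inr ⟨hx.1, h⟩)⟩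
    · exact ⟨d, hd, mem_uIcc.2 (Or.inl ⟨h, hx.2⟩)⟩
  have hab : 0 ≤ b - a := by
    obtain ⟨hac, hcb⟩ := derivedSet_subset_Icc hH hc
    linarith
  obtain ⟨F', hF', hF'H, hF'x⟩ := exists_superset_abs_amean_sub_le hH he
    (Nat.one_div_pos_of_nat (n := n)) hF₁H ⟨p, by simp [F₁]⟩ hx'
  refine ⟨F', Finset.subset_union_left.trans hF', hF'H, hF'x.trans ?_⟩
  calc (b - a) / (F₁.card + 1) + 2 * (1 / (n + 1)) ≤ (b - a) / (n + 1) + 2 * (1 / (n + 1)) := by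
        gcongr
    _ = (b - a + 2) / (n + 1) := by ring

lemma exists_monotone_iUnion_eq_of_forall_insert {α : Type*} [DecidableEq α] {H : Set α}
    (hcount : H.Countable) (hne : H.Nonempty) (P : ℕ → Finset α → Prop)
    (hP : ∀ n (F : Finset α), ↑F ⊆ H → ∀ p ∈ H, ∃ F', insert p F ⊆ F' ∧ ↑F' ⊆ H ∧ P n F') :
    ∃ G : ℕ → Finset α, (∀ n, G n ⊆ G (n + 1)) ∧ (∀ n, (G n).Nonempty) ∧
      ⋃ n, (G n : Set α) = H ∧ ∀ n, P n (G n) := by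
  obtain ⟨e, rfl⟩ := hcount.exists_eq_range hne
  choose! f hf using hP
  let G' : ℕ → Finset α := fun n =>
    Nat.rec (motive := fun _ => Finset α) ∅ (fun k F => f k F (e k)) n
  have hG'H (n : ℕ) : (G' n : Set α) ⊆ range e := by
    induction n with
    | zero => simp [G']
    | succ n ih => exact (hf n _ ih _ (mem_range_self n)).2.1
  have hG' (n : ℕ) := hf n (G' n) (hG'H n) (e n) (mem_range_self n)
  have he (n : ℕ) : e n ∈ G' (n + 1) := (hG' n).1 (Finset.mem_insert_self _ _)
  refine ⟨fun n => G' (n + 1), fun n => (Finset.subset_insert _ _).trans (hG' (n + 1)).1,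
    fun n => ⟨e n, he n⟩, ?_, fun n => (hG' n).2.2⟩
  exact (iUnion_subset fun n => hG'H (n + 1)).antisymm
    (range_subset_iff.2 fun n => mem_iUnion.2 ⟨n, he n⟩)

lemma exists_tendsto_amean {H : Set ℝ} {a b c d x : ℝ} (hcount : H.Countable) (hinf : H.Infinite)
    (hH : H ⊆ Icc a b) (hc : c ∈ derivedSet H) (hd : d ∈ derivedSet H) (hx : x ∈ Icc c d) :
    ∃ G : ℕ → Finset ℝ, (∀ n, G n ⊆ G (n + 1)) ∧ (∀ n, (G n).Nonempty) ∧
      ⋃ n, (G n : Set ℝ) = H ∧ Tendsto (fun n => amean (G n)) atTop (𝓝 x) := by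
  obtain ⟨G, hmono, hne, hGH, hG⟩ := exists_monotone_iUnion_eq_of_forall_insert hcount
    hinf.nonempty (fun n F => |amean F - x| ≤ (b - a + 2) / (n + 1))
    fun n _ hF _ hp => exists_insert_subset_abs_amean_sub_le hH hinf hc hd hx n hF hp
  refine ⟨G, hmono, hne, hGH, tendsto_iff_dist_tendsto_zero.2 ?_⟩
  have hbound : Tendsto (fun n : ℕ => (b - a + 2) / (n + 1)) atTop (𝓝 0) := by
    simpa [div_eq_mul_inv] using tendsto_one_div_add_atTop_nhds_zero_nat.const_mul (b - a + 2)
  exact squeeze_zero (fun _ => dist_nonneg) (fun n => (Real.dist_eq _ _).trans_le (hG n)) hbound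

theorem stmt_19 (H : Set ℝ) (hcount : H.Countable) (hinf : H.Infinite)
    (hbb : BddBelow H) (hba : BddAbove H) :
    {x : ℝ | ∃ Hn : ℕ → Finset ℝ,
        (∀ n, Hn n ⊆ Hn (n + 1)) ∧ (∀ n, (Hn n).Nonempty) ∧
        (⋃ n, ((Hn n : Set ℝ))) = H ∧
        Tendsto (fun n => (∑ y ∈ Hn n, y) / (Hn n).card) atTop (𝓝 x)} =
      Set.Icc (sInf (derivedSet H)) (sSup (derivedSet H)) := by
  obtain ⟨a, ha⟩ := hbb
  obtain ⟨b, hb⟩ := hba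
  have hH : H ⊆ Icc a b := fun y hy => ⟨ha hy, hb hy⟩
  have hD : IsCompact (derivedSet H) :=
    isCompact_Icc.of_isClosed_subset (isClosed_derivedSet H) (derivedSet_subset_Icc hH)
  have hDne : (derivedSet H).Nonempty := by
    obtain ⟨c, -, hc⟩ := hinf.exists_accPt_of_subset_isCompact isCompact_Icc hH
    exact ⟨c, hc⟩
  ext x
  constructor
  · rintro ⟨G, hmono, -, hGH, hlim⟩
    exact mem_Icc_of_tendsto_amean hH hinf (monotone_nat_of_le_succ hmono) hGH hlim
  · intro hx
    exact exists_tendsto_amean hcount hinf hH (hD.sInf_mem hDne) (hD.sSup_mem hDne) hx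
end
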